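/- arXiv:1507.01920 — 2 statements merged into one kernel-verified Lean document; each statement's English description precedes it below -/
import Mathlib

section
/- For all integers n > m ≥ 0, the exact identity n·p(n,m) = 1 + ∑_{m < k < n−m} p(k,m) holds, where the sum is over integers k with m < k < n − m. -/
open Polynomial

/-- Hypotheses characterizing Buchstab's function `ω`: continuous on `[1,∞)`,
`ω(u) = 1/u` on `[1,2]`, `(u·ω(u))' = ω(u-1)` for `u > 2`, and `ω(u) = 0` for `u < 1`. -/
def IsBuchstab (ω : ℝ → ℝ) : Prop :=
  ContinuousOn ω (Set.Ici 1) ∧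
  (∀ u : ℝ, 1 ≤ u → u ≤ 2 → ω u = 1 / u) ∧
  (∀ u : ℝ, 2 < u → HasDerivAt (fun t => t * ω t) (ω (u - 1)) u) ∧
  (∀ u : ℝ, u < 1 → ω u = 0)

/-- `κ` is the unique positive real with `1 = ∫₁^∞ ω(y)(y+1)^{-1-κ} dy`. -/
def IsKappa (ω : ℝ → ℝ) (κ : ℝ) : Prop :=
  0 < κ ∧ (∫ y in Set.Ioi (1 : ℝ), ω y * (y + 1) ^ (-1 - κ)) = 1

/-- The function `d` of the paper: `d(u) = 0` for `u < 0` and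
`d(u) = 1 - ∫₀^{(u-1)/2} d(v)/(v+1) · ω((u-v)/(v+1)) dv` for `u ≥ 0`. -/
def IsDFun (ω d : ℝ → ℝ) : Prop :=
  (∀ u : ℝ, u < 0 → d u = 0) ∧
  (∀ u : ℝ, 0 ≤ u →
    d u = 1 - ∫ v in (0 : ℝ)..((u - 1) / 2), d v / (v + 1) * ω ((u - v) / (v + 1)))

/-- `C = (1 - e^{-γ})⁻¹`. -/
noncomputable def constC : ℝ := (1 - Real.exp (-Real.eulerMascheroniConstant))⁻¹

/-- `H_m = ∑_{k=1}^m 1/k`. -/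
noncomputable def Hsum (m : ℕ) : ℝ := ∑ k ∈ Finset.Icc 1 m, (1 : ℝ) / k

/-- Proportion of monic polynomials of degree `n` over `F` with no non-constant
divisor of degree at most `m` ("m-rough"). -/
noncomputable def roughProportion (F : Type) [Field F] [Fintype F] (n m : ℕ) : ℝ :=
  (Nat.card {P : F[X] // P.Monic ∧ P.natDegree = n ∧
      ∀ D : F[X], D ∣ P → 1 ≤ D.natDegree → m < D.natDegree} : ℝ) /
    (Fintype.card F : ℝ) ^ n

/-- The set of degrees of monic divisors of `P`. -/
def degreeSet {F : Type} [Field F] (P : F[X]) : Set ℕ :=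
  {k | ∃ D : F[X], D.Monic ∧ D ∣ P ∧ D.natDegree = k}

/-- `A ⊆ [0,n]` has no gaps of size greater than `m`. -/
def NoGaps (n m : ℕ) (A : Set ℕ) : Prop :=
  ∀ a ∈ A, a < n → ∃ b ∈ A, a < b ∧ b ≤ a + m

/-- `f(n,m)`: proportion of monic polynomials of degree `n` over `F` whose set of
degrees of divisors has no gaps of size greater than `m`. -/
noncomputable def fProportion (F : Type) [Field F] [Fintype F] (n m : ℕ) : ℝ :=
  (Nat.card {P : F[X] // P.Monic ∧ P.natDegree = n ∧ NoGaps n m (degreeSet P)} : ℝ) /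
    (Fintype.card F : ℝ) ^ n

/-- `I_k`: the number of monic irreducible polynomials of degree `k` over `F`. -/
noncomputable def irreducibleCount (F : Type) [Field F] [Fintype F] (k : ℕ) : ℕ :=
  Nat.card {P : F[X] // P.Monic ∧ Irreducible P ∧ P.natDegree = k}

/-- `λ_q(m) = ∏_{k=1}^m (1 - q^{-k})^{I_k}`. -/
noncomputable def lambdaq (F : Type) [Field F] [Fintype F] (m : ℕ) : ℝ :=
  ∏ k ∈ Finset.Icc 1 m, (1 - ((Fintype.card F : ℝ))⁻¹ ^ k) ^ irreducibleCount F k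

/-- `p(n,m)`: proportion of permutations of `n` objects with no cycle of length at
most `m` (fixed points count as cycles of length 1; the cycle length of a point is
its minimal period). -/
noncomputable def pProportion (n m : ℕ) : ℝ :=
  (Nat.card {σ : Equiv.Perm (Fin n) // ∀ x : Fin n, m < Function.minimalPeriod ⇑σ x} : ℝ) /
    (n.factorial : ℝ)

/-- `A₃(σ)`: the set of sums of lengths of distinct cycles of `σ`, i.e. the set of
cardinalities of subsets `M` with `σ(M) = M`. -/
def sizesSet {n : ℕ} (σ : Equiv.Perm (Fin n)) : Set ℕ :=
  {k | ∃ M : Finset (Fin n), (∀ x ∈ M, σ x ∈ M) ∧ M.card = k}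

/-- `g(n,m)`: proportion of permutations `σ ∈ S_n` such that `A₃(σ)` has no gaps of
size greater than `m`. -/
noncomputable def gProportion (n m : ℕ) : ℝ :=
  (Nat.card {σ : Equiv.Perm (Fin n) // NoGaps n m (sizesSet σ)} : ℝ) / (n.factorial : ℝ)


/-!
Sort the permutations of an `n`-set without cycles of length at most `m` by the length `k + 1`
of the cycle through a fixed point `a`. That cycle is the list `a, σ a, …, σᵏ a`, chosen in
`(n - 1)(n - 2)⋯(n - k)` ways, and `σ` is this cycle times an arbitrary permutation without short
cycles of the remaining `n - k - 1` points. Dividing by `(n - 1)!` gives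
`n p(n,m) = ∑_{i < n - m} p(i,m)`, and `p(0,m) = 1` while `p(i,m) = 0` for `0 < i ≤ m`.
-/

open Equiv Function Finset

theorem Function.Semiconj.minimalPeriod_eq {α β : Type*} {f : α → α} {g : β → β}
    {h : α → β} (hs : Semiconj h f g) (hh : Injective h) (x : α) :
    minimalPeriod g (h x) = minimalPeriod f x := by
  rw [minimalPeriod_eq_minimalPeriod_iff]
  intro n
  simp only [IsPeriodicPt, IsFixedPt, ← hs.iterate_right n x, hh.eq_iff]

theorem Function.minimalPeriod_eq_of_eqOn {α : Type*} {f g : α → α} {s : Set α}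
    (hg : Set.MapsTo g s s) (hfg : Set.EqOn f g s) {x : α} (hx : x ∈ s) :
    minimalPeriod f x = minimalPeriod g x := by
  have hf : Set.MapsTo f s s := fun y hy => hfg hy ▸ hg hy
  have hres : hf.restrict f s s = hg.restrict g s s := funext fun y => Subtype.ext (hfg y.2)
  have hsf := Semiconj.minimalPeriod_eq (fun _ => rfl : Semiconj Subtype.val (hf.restrict f s s) f)
    Subtype.val_injective ⟨x, hx⟩
  have hsg := Semiconj.minimalPeriod_eq (fun _ => rfl : Semiconj Subtype.val (hg.restrict g s s) g)
    Subtype.val_injective ⟨x, hx⟩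
  rw [← hres] at hsg
  exact hsf.trans hsg.symm

namespace Equiv.Perm

variable {α β : Type*}

theorem minimalPeriod_permCongr (e : α ≃ β) (σ : Perm α) (x : α) :
    minimalPeriod (e.permCongr σ) (e x) = minimalPeriod σ x :=
  Semiconj.minimalPeriod_eq (fun y => by simp [permCongr_apply]) e.injective x

theorem minimalPeriod_subtypePerm {p : α → Prop} (σ : Perm α) (h : ∀ x, p (σ x) ↔ p x)
    (x : Subtype p) : minimalPeriod (σ.subtypePerm h) x = minimalPeriod σ x :=
  (Semiconj.minimalPeriod_eq (h := Subtype.val) (fun _ => rfl) Subtype.val_injective x).symm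

theorem minimalPeriod_ofSubtype {p : α → Prop} [DecidablePred p] (τ : Perm (Subtype p))
    (x : Subtype p) : minimalPeriod (ofSubtype τ) x = minimalPeriod τ x :=
  Semiconj.minimalPeriod_eq (fun y => (ofSubtype_apply_coe τ y).symm) Subtype.val_injective x

theorem minimalPeriod_formPerm [DecidableEq α] {l : List α} (hl : l.Nodup) {x : α}
    (hx : x ∈ l) :
    minimalPeriod l.formPerm x = l.length := by
  obtain ⟨i, hi, rfl⟩ := List.getElem_of_mem hx
  have hiter (n : ℕ) :
      (⇑l.formPerm)^[n] l[i] = l[(i + n) % l.length]'(Nat.mod_lt _ (by omega)) := by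
    rw [← coe_pow, List.formPerm_pow_apply_getElem l hl n i hi]
  have hlen : IsPeriodicPt l.formPerm l.length l[i] := by
    simp only [IsPeriodicPt, IsFixedPt, hiter, Nat.add_mod_right, Nat.mod_eq_of_lt hi]
  refine Nat.dvd_antisymm hlen.minimalPeriod_dvd ?_
  have hmod : i + minimalPeriod l.formPerm l[i] ≡ i + 0 [MOD l.length] := by
    have := hiter (minimalPeriod l.formPerm l[i])
    rw [iterate_minimalPeriod, eq_comm, hl.getElem_inj_iff] at this
    rw [Nat.ModEq, this, add_zero, Nat.mod_eq_of_lt hi]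
  exact Nat.modEq_zero_iff_dvd.mp (Nat.ModEq.add_left_cancel' i hmod)

theorem iterate_eq_getElem_of_eqOn_formPerm [DecidableEq α] {l : List α} (hl : l.Nodup)
    {σ : Perm α} (h : Set.EqOn σ l.formPerm {x | x ∈ l}) {i : ℕ} (hi : i < l.length) :
    (⇑σ)^[i] l[0] = l[i] := by
  induction i with
  | zero => rfl
  | succ i ih =>
    rw [iterate_succ_apply', ih (by omega), h (List.getElem_mem _),
      List.formPerm_apply_getElem l hl i (by omega)]
    simp only [Nat.mod_eq_of_lt hi]

theorem apply_mem_iff_of_eqOn_formPerm [DecidableEq α] {l : List α} {σ : Perm α}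
    (h : Set.EqOn σ l.formPerm {x | x ∈ l}) (x : α) : σ x ∈ l ↔ x ∈ l := by
  refine ⟨fun hσx => ?_, fun hx => h hx ▸ List.formPerm_mem_iff_mem.mpr hx⟩
  have hy : l.formPerm.symm (σ x) ∈ l := by
    rwa [← List.formPerm_mem_iff_mem, apply_symm_apply]
  have : σ (l.formPerm.symm (σ x)) = σ x := by rw [h hy, apply_symm_apply]
  rwa [← σ.injective this]

def NoShortCycles (m : ℕ) (σ : Perm α) : Prop :=
  ∀ x, m < minimalPeriod σ x

variable {m : ℕ}

theorem noShortCycles_permCongr_iff (e : α ≃ β) {σ : Perm α} :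
    (e.permCongr σ).NoShortCycles m ↔ σ.NoShortCycles m := by
  refine ⟨fun h x => minimalPeriod_permCongr e σ x ▸ h (e x), fun h y => ?_⟩
  rw [← e.apply_symm_apply y, minimalPeriod_permCongr]
  exact h _

theorem card_noShortCycles_congr (e : α ≃ β) :
    Nat.card {σ : Perm α // σ.NoShortCycles m} = Nat.card {σ : Perm β // σ.NoShortCycles m} :=
  Nat.card_congr (e.permCongr.subtypeEquiv fun _ => (noShortCycles_permCongr_iff e).symm)

section FormPerm

variable [DecidableEq α] {l : List α}

theorem eqOn_formPerm_mul_ofSubtype (τ : Perm {x // x ∉ l}) :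
    Set.EqOn (l.formPerm * ofSubtype τ) l.formPerm {x | x ∈ l} := fun x hx => by
  simp [ofSubtype_apply_of_not_mem τ (not_not.mpr hx)]

theorem eqOn_formPerm_mul_ofSubtype_compl (τ : Perm {x // x ∉ l}) :
    Set.EqOn (l.formPerm * ofSubtype τ) (ofSubtype τ) {x | x ∉ l} := fun x hx => by
  simp [ofSubtype_apply_of_mem τ hx, List.formPerm_apply_of_notMem (τ ⟨x, hx⟩).2]

theorem noShortCycles_formPerm_mul_ofSubtype (hl : l.Nodup) (hm : m < l.length)
    {τ : Perm {x // x ∉ l}} (hτ : τ.NoShortCycles m) :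
    (l.formPerm * ofSubtype τ).NoShortCycles m := by
  intro x
  by_cases hx : x ∈ l
  · rw [minimalPeriod_eq_of_eqOn (s := {x | x ∈ l}) (fun _ hy => List.formPerm_mem_iff_mem.mpr hy)
      (eqOn_formPerm_mul_ofSubtype τ) hx, minimalPeriod_formPerm hl hx]
    exact hm
  · have hτC : Set.MapsTo (ofSubtype τ) {x | x ∉ l} {x | x ∉ l} := fun y hy => by
      simp [ofSubtype_apply_of_mem τ hy]
    rw [minimalPeriod_eq_of_eqOn hτC (eqOn_formPerm_mul_ofSubtype_compl τ) hx,
      minimalPeriod_ofSubtype τ ⟨x, hx⟩]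
    exact hτ _

noncomputable def noShortCyclesEqOnFormPermEquiv (hl : l.Nodup) (hm : m < l.length) :
    {σ : Perm α // σ.NoShortCycles m ∧ Set.EqOn σ l.formPerm {x | x ∈ l}} ≃
      {τ : Perm {x // x ∉ l} // τ.NoShortCycles m} where
  toFun σ := ⟨σ.1.subtypePerm fun x => not_congr (apply_mem_iff_of_eqOn_formPerm σ.2.2 x),
    fun x => (minimalPeriod_subtypePerm _ _ x).symm ▸ σ.2.1 x⟩
  invFun τ := ⟨l.formPerm * ofSubtype τ.1, noShortCycles_formPerm_mul_ofSubtype hl hm τ.2,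
    eqOn_formPerm_mul_ofSubtype τ.1⟩
  left_inv σ := by
    refine Subtype.ext (Equiv.ext fun x => ?_)
    by_cases hx : x ∈ l
    · simp [ofSubtype_apply_of_not_mem (p := (· ∉ l)) _ (not_not.mpr hx), σ.2.2 hx]
    · have hσx : σ.1 x ∉ l := (not_congr (apply_mem_iff_of_eqOn_formPerm σ.2.2 x)).mpr hx
      simp [ofSubtype_apply_of_mem (p := (· ∉ l)) _ hx, List.formPerm_apply_of_notMem hσx]
  right_inv τ := by
    refine Subtype.ext (Equiv.ext fun x => Subtype.ext ?_)
    simp [List.formPerm_apply_of_notMem (τ.1 x).2]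

end FormPerm

section CycleList

variable (a : α) {k : ℕ}

def cycleList (e : Fin k ↪ {x // x ≠ a}) : List α :=
  a :: List.ofFn fun i => (e i : α)

theorem length_cycleList (e : Fin k ↪ {x // x ≠ a}) : (cycleList a e).length = k + 1 := by
  simp [cycleList]

theorem nodup_cycleList (e : Fin k ↪ {x // x ≠ a}) : (cycleList a e).Nodup := by
  refine List.nodup_cons.mpr ⟨fun ha => ?_, List.nodup_ofFn.mpr ?_⟩
  · obtain ⟨i, hi⟩ := List.mem_ofFn.mp ha
    exact (e i).2 hi
  · exact fun i j hij => e.injective (Subtype.ext hij)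

def orbitEmbedding (σ : Perm α) (h : minimalPeriod σ a = k + 1) : Fin k ↪ {x // x ≠ a} where
  toFun i := ⟨(⇑σ)^[i + 1] a, fun hi => by
    have := (iterate_eq_iterate_iff_of_lt_minimalPeriod (n := 0) (by omega) (by omega)).mp hi
    omega⟩
  inj' i j hij := Fin.ext <| by
    have := (iterate_eq_iterate_iff_of_lt_minimalPeriod (by omega) (by omega)).mp
      (congrArg Subtype.val hij)
    omega

theorem getElem_cycleList_orbitEmbedding (σ : Perm α) (h : minimalPeriod σ a = k + 1) {i : ℕ}
    (hi : i < (cycleList a (orbitEmbedding a σ h)).length) :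
    (cycleList a (orbitEmbedding a σ h))[i] = (⇑σ)^[i] a := by
  cases i with
  | zero => rfl
  | succ i => simp [cycleList, orbitEmbedding]

theorem eqOn_formPerm_cycleList_orbitEmbedding [DecidableEq α] (σ : Perm α)
    (h : minimalPeriod σ a = k + 1) :
    Set.EqOn σ (cycleList a (orbitEmbedding a σ h)).formPerm
      {x | x ∈ cycleList a (orbitEmbedding a σ h)} := by
  rintro _ hx
  obtain ⟨i, hi, rfl⟩ := List.getElem_of_mem hx
  rw [List.formPerm_apply_getElem _ (nodup_cycleList a _), getElem_cycleList_orbitEmbedding,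
    getElem_cycleList_orbitEmbedding, length_cycleList, ← h, iterate_mod_minimalPeriod_eq,
    iterate_succ_apply']

theorem minimalPeriod_eq_of_eqOn_formPerm_cycleList [DecidableEq α] {σ : Perm α}
    {e : Fin k ↪ {x // x ≠ a}}
    (h : Set.EqOn σ (cycleList a e).formPerm {x | x ∈ cycleList a e}) :
    minimalPeriod σ a = k + 1 := by
  have ha : a ∈ cycleList a e := List.mem_cons_self
  rw [minimalPeriod_eq_of_eqOn (s := {x | x ∈ cycleList a e})
    (fun _ hy => List.formPerm_mem_iff_mem.mpr hy) h ha,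
    minimalPeriod_formPerm (nodup_cycleList a e) ha, length_cycleList]

theorem eq_orbitEmbedding_of_eqOn_formPerm_cycleList [DecidableEq α] {σ : Perm α}
    {e : Fin k ↪ {x // x ≠ a}}
    (h : Set.EqOn σ (cycleList a e).formPerm {x | x ∈ cycleList a e}) :
    e = orbitEmbedding a σ (minimalPeriod_eq_of_eqOn_formPerm_cycleList a h) := by
  ext i
  have hi : i.1 + 1 < (cycleList a e).length := by rw [length_cycleList]; omega
  have := iterate_eq_getElem_of_eqOn_formPerm (nodup_cycleList a e) h hi
  simp only [cycleList, List.getElem_cons_zero, List.getElem_cons_succ, List.getElem_ofFn] at this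
  exact this.symm

end CycleList

noncomputable def noShortCyclesMinimalPeriodEquiv [DecidableEq α] (a : α) (k : ℕ) :
    {σ : Perm α // σ.NoShortCycles m ∧ minimalPeriod σ a = k + 1} ≃
      Σ e : Fin k ↪ {x // x ≠ a}, {σ : Perm α // σ.NoShortCycles m ∧
        Set.EqOn σ (cycleList a e).formPerm {x | x ∈ cycleList a e}} where
  toFun σ := ⟨orbitEmbedding a σ.1 σ.2.2, σ.1, σ.2.1,
    eqOn_formPerm_cycleList_orbitEmbedding a σ.1 σ.2.2⟩
  invFun p := ⟨p.2.1, p.2.2.1, minimalPeriod_eq_of_eqOn_formPerm_cycleList a p.2.2.2⟩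
  left_inv _ := rfl
  right_inv p := Sigma.subtype_ext (eq_orbitEmbedding_of_eqOn_formPerm_cycleList a p.2.2.2).symm rfl

theorem card_subtype_notMem_of_nodup [Fintype α] [DecidableEq α] {l : List α} (hl : l.Nodup) :
    Fintype.card {x // x ∉ l} = Fintype.card α - l.length := by
  rw [Fintype.card_subtype_compl, Fintype.card_subtype, ← List.toFinset_card_of_nodup hl]
  congr 2
  ext
  simp

theorem card_noShortCycles_minimalPeriod_eq [Fintype α] [DecidableEq α] {n : ℕ}
    (hα : Fintype.card α = n) (a : α) {k : ℕ} (hk : m ≤ k) :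
    Nat.card {σ : Perm α // σ.NoShortCycles m ∧ minimalPeriod σ a = k + 1} =
      (n - 1).descFactorial k * Nat.card {σ : Perm (Fin (n - (k + 1))) // σ.NoShortCycles m} := by
  have hfiber (e : Fin k ↪ {x // x ≠ a}) :
      Nat.card {σ : Perm α // σ.NoShortCycles m ∧
        Set.EqOn σ (cycleList a e).formPerm {x | x ∈ cycleList a e}} =
      Nat.card {σ : Perm (Fin (n - (k + 1))) // σ.NoShortCycles m} := by
    rw [Nat.card_congr (noShortCyclesEqOnFormPermEquiv (nodup_cycleList a e)
      (by rw [length_cycleList]; omega))]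
    refine card_noShortCycles_congr (Fintype.equivFinOfCardEq ?_)
    rw [card_subtype_notMem_of_nodup (nodup_cycleList a e), length_cycleList, hα]
  rw [Nat.card_congr (noShortCyclesMinimalPeriodEquiv (m := m) a k), Nat.card_sigma]
  simp only [hfiber, sum_const, card_univ, smul_eq_mul, Fintype.card_embedding_eq,
    Fintype.card_fin, Fintype.card_subtype_compl, Fintype.card_unique, hα]

theorem card_noShortCycles_eq_sum [Fintype α] [DecidableEq α] {n : ℕ}
    (hα : Fintype.card α = n) (a : α) :
    Nat.card {σ : Perm α // σ.NoShortCycles m} =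
      ∑ k ∈ Ico m n, (n - 1).descFactorial k *
        Nat.card {σ : Perm (Fin (n - (k + 1))) // σ.NoShortCycles m} := by
  classical
  have hmaps : ∀ σ ∈ ({σ | σ.NoShortCycles m} : Finset (Perm α)),
      minimalPeriod σ a - 1 ∈ Ico m n := fun σ hσ => by
    have := (mem_filter.mp hσ).2 a
    have := minimalPeriod_le_card (f := σ) (x := a)
    rw [mem_Ico]
    omega
  rw [Nat.card_eq_fintype_card, Fintype.card_subtype, card_eq_sum_card_fiberwise hmaps]
  refine sum_congr rfl fun k hk => ?_
  rw [← card_noShortCycles_minimalPeriod_eq hα a (mem_Ico.mp hk).1, Nat.card_eq_fintype_card,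
    Fintype.card_subtype, filter_filter]
  refine congrArg _ (filter_congr fun σ _ => and_congr_right fun hσ => ?_)
  have := hσ a
  omega

end Equiv.Perm

theorem pProportion_eq_card_div (n m : ℕ) :
    pProportion n m = Nat.card {σ : Perm (Fin n) // σ.NoShortCycles m} / n.factorial :=
  rfl

theorem pProportion_zero_left (m : ℕ) : pProportion 0 m = 1 := by
  rw [pProportion_eq_card_div,
    Nat.card_eq_one_iff_unique.mpr ⟨inferInstance, ⟨1, fun x => x.elim0⟩⟩]
  simp

theorem pProportion_eq_zero {k m : ℕ} (hk : 0 < k) (hkm : k ≤ m) : pProportion k m = 0 := by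
  have : IsEmpty {σ : Perm (Fin k) // σ.NoShortCycles m} :=
    ⟨fun σ => by
      have := σ.2 ⟨0, hk⟩
      have := minimalPeriod_le_card (f := σ.1) (x := ⟨0, hk⟩)
      simp only [Fintype.card_fin] at this
      omega⟩
  rw [pProportion_eq_card_div, Nat.card_of_isEmpty, Nat.cast_zero, zero_div]

theorem natCast_mul_pProportion {n m : ℕ} (h : m < n) :
    n * pProportion n m = ∑ i ∈ range (n - m), pProportion i m := by
  have hN := Perm.card_noShortCycles_eq_sum (m := m) (Fintype.card_fin n) ⟨0, by omega⟩
  calc (n : ℝ) * pProportion n m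
      = Nat.card {σ : Perm (Fin n) // σ.NoShortCycles m} / (n - 1).factorial := by
        have hn : (n : ℝ) ≠ 0 := by exact_mod_cast (by omega : n ≠ 0)
        rw [pProportion_eq_card_div, ← Nat.mul_factorial_pred (by omega : n ≠ 0)]
        push_cast
        field_simp
    _ = ∑ k ∈ Ico m n, pProportion (n - 1 - k) m := by
        rw [hN]
        push_cast
        rw [sum_div]
        refine sum_congr rfl fun k hk => ?_
        have hkn : k ≤ n - 1 := by rw [mem_Ico] at hk; omega
        have hd : ((n - 1).descFactorial k : ℝ) ≠ 0 :=
          Nat.cast_ne_zero.mpr (Nat.descFactorial_eq_zero_iff_lt.not.mpr (by omega))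
        rw [pProportion_eq_card_div, show n - (k + 1) = n - 1 - k by omega,
          ← Nat.factorial_mul_descFactorial hkn, Nat.cast_mul, mul_comm, mul_div_mul_right _ _ hd]
    _ = ∑ i ∈ range (n - m), pProportion i m := by
        rw [sum_Ico_eq_sum_range, ← sum_range_reflect]
        refine sum_congr rfl fun i hi => ?_
        rw [mem_range] at hi
        congr 1
        omega

/-- **Lemma 8.** For `n > m ≥ 0`: `n·p(n,m) = 1 + ∑_{m < k < n-m} p(k,m)`. -/
theorem statement18 (n m : ℕ) (h : m < n) :
    (n : ℝ) * pProportion n m = 1 + ∑ k ∈ Finset.Ioo m (n - m), pProportion k m := by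
  rw [natCast_mul_pProportion h, range_eq_Ico, sum_eq_sum_Ico_succ_bot (by omega),
    pProportion_zero_left]
  congr 1
  refine (sum_subset (fun k hk => ?_) fun k hk hk' => ?_).symm
  · simp only [mem_Ioo, mem_Ico] at hk ⊢
    omega
  · simp only [mem_Ioo, mem_Ico, not_and_or, not_lt] at hk hk'
    exact pProportion_eq_zero (by omega) (by omega)
end

section
/- Let q be a prime power, m ≥ 1 an integer, and let F = P₁·P₂·⋯·P_j be a monic polynomial of degree n ≥ 1 over 𝔽_q, where P₁,…,P_j are monic irreducible polynomials (listed with multiplicity) ordered so that deg(P₁) ≤ deg(P₂) ≤ ⋯ ≤ deg(P_j). Then the set A₁(F) of degrees of monic divisors of F has no gaps of size greater than m if and only if deg(P_i) ≤ m + deg(P₁⋯P_{i−1}) for every i with 1 ≤ i ≤ j, where the empty product (for i = 1) has degree 0. -/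
open Polynomial

/-!
Multiplying a polynomial `Q` by a monic irreducible `P` turns the degree set `A` of `Q` into
`A ∪ (A + deg P)`. If `A ⊆ [0, deg Q]` contains `0` and has no gaps of size `> m`, the new set has
no gaps of size `> m` as soon as `deg P ≤ m + deg Q`; building `F` factor by factor gives one
direction. Conversely, if the factors are sorted, every divisor of `F` has degree at most
`deg(P₁⋯P_{i-1})` or at least `deg Pᵢ`, so the divisor `P₁⋯P_{i-1}` forces `deg Pᵢ` to lie
within `m` of its degree.
-/

namespace NoGaps

variable {N m : ℕ} {A : Set ℕ}

theorem exists_between (h : NoGaps N m A) (h0 : 0 ∈ A) {t : ℕ} (ht : t < N) :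
    ∃ b ∈ A, t < b ∧ b ≤ t + m := by
  classical
  -- the gap after the largest element of `A` below `t` covers `t`
  set a := Nat.findGreatest (· ∈ A) t
  have haA : a ∈ A := Nat.findGreatest_spec (Nat.zero_le t) h0
  have hat : a ≤ t := Nat.findGreatest_le t
  obtain ⟨b, hbA, hab, hbm⟩ := h a haA (hat.trans_lt ht)
  have htb : t < b := by
    by_contra! hbt
    exact absurd (Nat.le_findGreatest hbt hbA) (not_le.2 hab)
  exact ⟨b, hbA, htb, by omega⟩

theorem union_image_add (h : NoGaps N m A) (h0 : 0 ∈ A) (hle : ∀ a ∈ A, a ≤ N) {d : ℕ}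
    (hd : d ≤ m + N) : NoGaps (N + d) m (A ∪ (· + d) '' A) := by
  rintro a (haA | ⟨c, hcA, rfl⟩) had
  · rcases (hle a haA).lt_or_eq with haN | rfl
    · obtain ⟨b, hbA, hab, hbm⟩ := h a haA haN
      exact ⟨b, Or.inl hbA, hab, hbm⟩
    · by_cases hdm : d ≤ m
      · exact ⟨a + d, Or.inr ⟨a, haA, rfl⟩, by omega, by omega⟩
      by_cases hda : d ≤ a
      · obtain ⟨c, hcA, hc, hcm⟩ := h.exists_between h0 (t := a - d) (by omega)
        exact ⟨c + d, Or.inr ⟨c, hcA, rfl⟩, by omega, by omega⟩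
      · exact ⟨0 + d, Or.inr ⟨0, h0, rfl⟩, by omega, by omega⟩
  · dsimp only at had ⊢
    obtain ⟨b, hbA, hcb, hbm⟩ := h c hcA (by omega)
    exact ⟨b + d, Or.inr ⟨b, hbA, rfl⟩, by omega, by omega⟩

end NoGaps

section DegreeSet

variable {F : Type} [Field F]

theorem monic_list_prod {l : List F[X]} (h : ∀ P ∈ l, P.Monic) : l.prod.Monic := by
  simpa using monic_multiset_prod_of_monic (l : Multiset F[X]) id h

theorem zero_mem_degreeSet (Q : F[X]) : 0 ∈ degreeSet Q :=
  ⟨1, monic_one, one_dvd _, natDegree_one⟩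

theorem le_natDegree_of_mem_degreeSet {Q : F[X]} (hQ : Q ≠ 0) {b : ℕ} (hb : b ∈ degreeSet Q) :
    b ≤ Q.natDegree := by
  obtain ⟨D, -, hD, rfl⟩ := hb
  exact natDegree_le_of_dvd hD hQ

theorem degreeSet_mul_of_irreducible (Q : F[X]) {P : F[X]} (hP : P.Monic)
    (hPi : Irreducible P) :
    degreeSet (Q * P) = degreeSet Q ∪ (· + P.natDegree) '' degreeSet Q := by
  ext b
  constructor
  · rintro ⟨D, hD, hDQP, rfl⟩
    by_cases hPD : P ∣ D
    · obtain ⟨E, rfl⟩ := hPD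
      have hE : E.Monic := hP.of_mul_monic_left hD
      have hEQ : E ∣ Q := by
        rw [mul_comm Q] at hDQP
        exact (mul_dvd_mul_iff_left hP.ne_zero).1 hDQP
      exact Or.inr ⟨E.natDegree, ⟨E, hE, hEQ, rfl⟩, by rw [hP.natDegree_mul hE, add_comm]⟩
    · exact Or.inl ⟨D, hD, ((hPi.coprime_iff_not_dvd.2 hPD).symm.dvd_of_dvd_mul_right hDQP), rfl⟩
  · rintro (⟨D, hD, hDQ, rfl⟩ | ⟨-, ⟨D, hD, hDQ, rfl⟩, rfl⟩)
    · exact ⟨D, hD, hDQ.mul_right P, rfl⟩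
    · exact ⟨D * P, hD.mul hP, mul_dvd_mul_right hDQ P, hD.natDegree_mul hP⟩

theorem noGaps_degreeSet_mul {m : ℕ} {Q P : F[X]} (hQ : Q ≠ 0) (hP : P.Monic)
    (hPi : Irreducible P) (hgaps : NoGaps Q.natDegree m (degreeSet Q))
    (hdeg : P.natDegree ≤ m + Q.natDegree) :
    NoGaps (Q * P).natDegree m (degreeSet (Q * P)) := by
  rw [degreeSet_mul_of_irreducible Q hP hPi, natDegree_mul hQ hP.ne_zero]
  exact hgaps.union_image_add (zero_mem_degreeSet Q)
    (fun _ => le_natDegree_of_mem_degreeSet hQ) hdeg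

theorem le_natDegree_or_le_of_mem_degreeSet_mul_prod {Q : F[X]} (hQ : Q ≠ 0) {l : List F[X]}
    (hmonic : ∀ P ∈ l, P.Monic) (hirr : ∀ P ∈ l, Irreducible P) {d : ℕ}
    (hdeg : ∀ P ∈ l, d ≤ P.natDegree) {b : ℕ} (hb : b ∈ degreeSet (Q * l.prod)) :
    b ≤ Q.natDegree ∨ d ≤ b := by
  induction l with
  | nil =>
    rw [List.prod_nil, mul_one] at hb
    exact Or.inl (le_natDegree_of_mem_degreeSet hQ hb)
  | cons P t ih =>
    simp only [List.forall_mem_cons] at hmonic hirr hdeg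
    rw [List.prod_cons, mul_left_comm, mul_comm,
      degreeSet_mul_of_irreducible _ hmonic.1 hirr.1] at hb
    rcases hb with hb | ⟨c, -, rfl⟩
    · exact ih hmonic.2 hirr.2 hdeg.2 hb
    · exact Or.inr (hdeg.1.trans (Nat.le_add_left _ _))

end DegreeSet

section Factorization

variable {F : Type} [Field F] {m : ℕ} {l : List F[X]}

theorem natDegree_get_le_add_of_noGaps (hmonic : ∀ P ∈ l, P.Monic)
    (hirr : ∀ P ∈ l, Irreducible P) (hsorted : l.Pairwise fun A B => A.natDegree ≤ B.natDegree)
    (h : NoGaps l.prod.natDegree m (degreeSet l.prod)) (i : Fin l.length) :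
    (l.get i).natDegree ≤ m + ((l.take i).prod).natDegree := by
  set Q := (l.take i).prod
  set d := (l.get i).natDegree
  have hQ : Q.Monic := monic_list_prod fun P hP => hmonic P (List.mem_of_mem_take hP)
  have hdrop : l.drop i = l.get i :: l.drop (i + 1) := List.drop_eq_getElem_cons i.isLt
  have hprod : l.prod = Q * (l.drop i).prod := (List.prod_take_mul_prod_drop l i).symm
  have hdeg_drop : ∀ P ∈ l.drop i, d ≤ P.natDegree := by
    have hsorted_drop := hsorted.sublist (List.drop_sublist i l)
    rw [hdrop, List.pairwise_cons] at hsorted_drop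
    rw [hdrop, List.forall_mem_cons]
    exact ⟨le_rfl, hsorted_drop.1⟩
  have hlt : Q.natDegree < l.prod.natDegree := by
    have hrest : (l.drop (i + 1)).prod.Monic :=
      monic_list_prod fun P hP => hmonic P (List.mem_of_mem_drop hP)
    rw [hprod, hdrop, List.prod_cons, hQ.natDegree_mul ((hmonic _ (l.get_mem i)).mul hrest),
      (hmonic _ (l.get_mem i)).natDegree_mul hrest]
    have := (hirr _ (l.get_mem i)).natDegree_pos
    omega
  obtain ⟨b, hb, hQb, hbm⟩ :=
    h Q.natDegree ⟨Q, hQ, hprod ▸ dvd_mul_right _ _, rfl⟩ hlt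
  rw [hprod] at hb
  have := le_natDegree_or_le_of_mem_degreeSet_mul_prod hQ.ne_zero
    (fun P hP => hmonic P (List.mem_of_mem_drop hP))
    (fun P hP => hirr P (List.mem_of_mem_drop hP)) hdeg_drop hb
  omega

theorem noGaps_of_natDegree_get_le_add (hmonic : ∀ P ∈ l, P.Monic)
    (hirr : ∀ P ∈ l, Irreducible P)
    (h : ∀ i : Fin l.length, (l.get i).natDegree ≤ m + ((l.take i).prod).natDegree) :
    NoGaps l.prod.natDegree m (degreeSet l.prod) := by
  suffices ∀ k ≤ l.length, NoGaps (l.take k).prod.natDegree m (degreeSet (l.take k).prod) by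
    simpa using this l.length le_rfl
  intro k hk
  induction k with
  | zero =>
    intro a _ ha
    simp at ha
  | succ k ih =>
    have hQ : (l.take k).prod ≠ 0 :=
      (monic_list_prod fun P hP => hmonic P (List.mem_of_mem_take hP)).ne_zero
    rw [List.take_succ_eq_append_getElem hk, List.prod_append, List.prod_singleton]
    exact noGaps_degreeSet_mul hQ (hmonic _ (List.getElem_mem _)) (hirr _ (List.getElem_mem _))
      (ih (by omega)) (h ⟨k, hk⟩)

end Factorization

theorem statement19_general (F : Type) [Field F] (m : ℕ)
    (l : List (Polynomial F)) (hmonic : ∀ P ∈ l, P.Monic) (hirr : ∀ P ∈ l, Irreducible P)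
    (hsorted : l.Pairwise fun A B => A.natDegree ≤ B.natDegree)
    (n : ℕ) (hdeg : l.prod.natDegree = n) :
    NoGaps n m (degreeSet l.prod) ↔
      ∀ i : Fin l.length, (l.get i).natDegree ≤ m + ((l.take i).prod).natDegree := by
  subst hdeg
  exact ⟨natDegree_get_le_add_of_noGaps hmonic hirr hsorted,
    noGaps_of_natDegree_get_le_add hmonic hirr⟩

/-- **Lemma (structure of `A₁`).** Let `F = P₁⋯P_j` be monic of degree `n ≥ 1` with the
`Pᵢ` monic irreducible and sorted by degree. Then the set of degrees of divisors of `F`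
has no gaps of size greater than `m` iff `deg Pᵢ ≤ m + deg(P₁⋯P_{i-1})` for all `i`. -/
theorem statement19 (F : Type) [Field F] [Fintype F] (m : ℕ) (hm : 1 ≤ m)
    (l : List (Polynomial F)) (hmonic : ∀ P ∈ l, P.Monic) (hirr : ∀ P ∈ l, Irreducible P)
    (hsorted : l.Pairwise fun A B => A.natDegree ≤ B.natDegree)
    (n : ℕ) (hn : 1 ≤ n) (hdeg : l.prod.natDegree = n) :
    NoGaps n m (degreeSet l.prod) ↔
      ∀ i : Fin l.length, (l.get i).natDegree ≤ m + ((l.take i).prod).natDegree :=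
  statement19_general F m l hmonic hirr hsorted n hdeg
end
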